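/- arXiv:1105.0852 — 3 statements merged into one kernel-verified Lean document; each statement's English description precedes it below -/
import Mathlib

section
/- For every linear subspace 𝒩 of the marginal space 𝒯 one has Cᵀ P^D_𝒩 = 0, and consequently Z°⁻ Cᵀ (P^D_ℋ − P^D_𝒩) D⁻¹ C Z°⁻ᵀ = Z°⁻ Cᵀ P^D_ℋ D⁻¹ C Z°⁻ᵀ; i.e. the asymptotic covariance matrix Σ_θ̂ = Z°⁻ Cᵀ P^D_ℋ D⁻¹ C Z°⁻ᵀ of the odds-ratio parameter estimator is the same for every choice of 𝒩 ⊆ 𝒯 (in particular for 𝒩 = 𝒟, ℛ, 𝒞 or {0}, corresponding to multinomial, row-multinomial, column-multinomial and Poisson sampling). -/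
open Matrix BigOperators

noncomputable section

/-- Cells `(j,k)` of a `(J+1) × (K+1)` contingency table. -/
abbrev Cell (J K : ℕ) := Fin (J + 1) × Fin (K + 1)

/-- Standard unit vector `e_{jk}` in `ℝ^I`. -/
def eV {J K : ℕ} (c : Cell J K) : Cell J K → ℝ := Pi.single c 1

/-- Row-sum vector `e_{j+} = Σ_k e_{jk}`. -/
def eRow {J K : ℕ} (j : Fin (J + 1)) : Cell J K → ℝ := ∑ k : Fin (K + 1), eV (j, k)

/-- Column-sum vector `e_{+k} = Σ_j e_{jk}`. -/
def eCol {J K : ℕ} (k : Fin (K + 1)) : Cell J K → ℝ := ∑ j : Fin (J + 1), eV (j, k)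

/-- The all-ones vector `e_{++}`. -/
def eAll (J K : ℕ) : Cell J K → ℝ := ∑ j : Fin (J + 1), ∑ k : Fin (K + 1), eV (j, k)

/-- The row space `ℛ = span{e_{0+},…,e_{J+}}`. -/
def rowSpace (J K : ℕ) : Submodule ℝ (Cell J K → ℝ) :=
  Submodule.span ℝ (Set.range (eRow (J := J) (K := K)))

/-- The column space `𝒞 = span{e_{+0},…,e_{+K}}`. -/
def colSpace (J K : ℕ) : Submodule ℝ (Cell J K → ℝ) :=
  Submodule.span ℝ (Set.range (eCol (J := J) (K := K)))

/-- The diagonal space `𝒟 = span{e_{++}}`. -/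
def diagSpace (J K : ℕ) : Submodule ℝ (Cell J K → ℝ) :=
  Submodule.span ℝ {eAll J K}

/-- The marginal space `𝒯 = ℛ + 𝒞`. -/
def margSpace (J K : ℕ) : Submodule ℝ (Cell J K → ℝ) := rowSpace J K ⊔ colSpace J K

/-- `P` is the `D`-orthogonal projection matrix onto the subspace `S`:
`P x ∈ S` and `x - P x` is `D`-orthogonal to `S`, for every `x`. -/
def IsProjD {J K : ℕ} (D : Matrix (Cell J K) (Cell J K) ℝ) (S : Submodule ℝ (Cell J K → ℝ))
    (P : Matrix (Cell J K) (Cell J K) ℝ) : Prop :=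
  ∀ x, P.mulVec x ∈ S ∧ ∀ s ∈ S, (x - P.mulVec x) ⬝ᵥ D.mulVec s = 0

/-- The `D`-orthogonal complement of a subspace `S`. -/
def perpD {J K : ℕ} (D : Matrix (Cell J K) (Cell J K) ℝ) (S : Submodule ℝ (Cell J K → ℝ)) :
    Submodule ℝ (Cell J K → ℝ) where
  carrier := {x | ∀ t ∈ S, x ⬝ᵥ D.mulVec t = 0}
  add_mem' := by
    intro a b ha hb t ht
    simp only [Set.mem_setOf_eq] at *
    simp [add_dotProduct, ha t ht, hb t ht]
  zero_mem' := by
    intro t ht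
    simp
  smul_mem' := by
    intro c a ha t ht
    simp only [Set.mem_setOf_eq] at *
    simp [smul_dotProduct, ha t ht]

/-- The vector `c_{jk} = e_{jk} + e_{00} - e_{j0} - e_{0k}` (for `1 ≤ j`, `1 ≤ k`). -/
def cVec {J K : ℕ} (j : Fin J) (k : Fin K) : Cell J K → ℝ :=
  eV (j.succ, k.succ) + eV (0, 0) - eV (j.succ, 0) - eV (0, k.succ)

/-- The `I × (JK)` matrix `C` with columns `c_{jk}`. -/
def Cmat (J K : ℕ) : Matrix (Cell J K) (Fin J × Fin K) ℝ :=
  fun i jk => cVec jk.1 jk.2 i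

/-- The vector `b_k = e_{0k} - e_{00}` (for `1 ≤ k`). -/
def bVec {J K : ℕ} (k : Fin K) : Cell J K → ℝ :=
  eV ((0 : Fin (J + 1)), k.succ) - eV (0, 0)

/-- The `I × K` matrix `B` with columns `b_k`. -/
def Bmat (J K : ℕ) : Matrix (Cell J K) (Fin K) ℝ :=
  fun i k => bVec k i

/-- The `I × K` matrix `E` with columns `e_{+1},…,e_{+K}`. -/
def Emat (J K : ℕ) : Matrix (Cell J K) (Fin K) ℝ :=
  fun i k => eCol k.succ i

/-- Column space of a matrix. -/
def colSpan {m n : Type*} [Fintype n] (A : Matrix m n ℝ) : Submodule ℝ (m → ℝ) :=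
  Submodule.span ℝ (Set.range fun j => fun i => A i j)

/-- The reduced `(JK) × L` covariate matrix `Z°` with rows `z_{jk}ᵀ`, `j,k ≥ 1`. -/
def Zred {J K : ℕ} {L : Type*} (Z : Matrix (Cell J K) L ℝ) : Matrix (Fin J × Fin K) L ℝ :=
  fun jk => Z (jk.1.succ, jk.2.succ)

/-- The model space `ℋ = 𝒯 + col(Z)` of the log-linear model
`η_{jk} = α + ρ_j + γ_k + z_{jk}ᵀ θ`. -/
def modelSpace {J K : ℕ} {L : Type*} [Fintype L] (Z : Matrix (Cell J K) L ℝ) :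
    Submodule ℝ (Cell J K → ℝ) :=
  margSpace J K ⊔ colSpan Z

end

/- The contrast `c_{jk}` annihilates every `x` of the form `x (a, b) = g a + h b`, and `𝒯` consists
of such vectors. Hence `Cᵀ` kills every matrix whose columns lie in `𝒩 ⊆ 𝒯`, in particular
`P^D_𝒩`, and the `P^D_𝒩` term drops out of the covariance. -/

section Contrasts

variable {J K : ℕ}

lemma eV_dotProduct (c : Cell J K) (x : Cell J K → ℝ) : eV c ⬝ᵥ x = x c := by
  simp [eV, single_dotProduct]

lemma cVec_dotProduct (j : Fin J) (k : Fin K) (x : Cell J K → ℝ) :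
    cVec j k ⬝ᵥ x = x (j.succ, k.succ) + x (0, 0) - x (j.succ, 0) - x (0, k.succ) := by
  simp only [cVec, sub_dotProduct, add_dotProduct, eV_dotProduct]

lemma eRow_eq (j : Fin (J + 1)) : eRow j = fun c : Cell J K => if c.1 = j then 1 else 0 := by
  funext c
  by_cases h : c.1 = j <;> simp [eRow, eV, Finset.sum_apply, Pi.single_apply, Prod.ext_iff, h]

lemma eCol_eq (k : Fin (K + 1)) : eCol k = fun c : Cell J K => if c.2 = k then 1 else 0 := by
  funext c
  by_cases h : c.2 = k <;> simp [eCol, eV, Finset.sum_apply, Pi.single_apply, Prod.ext_iff, h]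

lemma Cmat_transpose_mulVec_apply (x : Cell J K → ℝ) (jk : Fin J × Fin K) :
    ((Cmat J K)ᵀ *ᵥ x) jk = cVec jk.1 jk.2 ⬝ᵥ x :=
  rfl

lemma Cmat_transpose_mulVec_additive (g : Fin (J + 1) → ℝ) (h : Fin (K + 1) → ℝ) :
    (Cmat J K)ᵀ *ᵥ (fun c => g c.1 + h c.2) = 0 := by
  ext jk
  rw [Cmat_transpose_mulVec_apply, cVec_dotProduct, Pi.zero_apply]
  ring

lemma margSpace_le_ker_Cmat_transpose :
    margSpace J K ≤ LinearMap.ker (Cmat J K)ᵀ.mulVecLin := by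
  refine sup_le (Submodule.span_le.2 ?_) (Submodule.span_le.2 ?_)
  · rintro _ ⟨j, rfl⟩
    rw [SetLike.mem_coe, LinearMap.mem_ker, mulVecLin_apply, eRow_eq]
    simpa using Cmat_transpose_mulVec_additive (fun a => if a = j then 1 else 0) 0
  · rintro _ ⟨k, rfl⟩
    rw [SetLike.mem_coe, LinearMap.mem_ker, mulVecLin_apply, eCol_eq]
    simpa using Cmat_transpose_mulVec_additive 0 (fun b => if b = k then 1 else 0)

end Contrasts

lemma IsProjD.mul_eq_zero_of_le_ker {J K : ℕ} {m : Type*} {D P : Matrix (Cell J K) (Cell J K) ℝ}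
    {S : Submodule ℝ (Cell J K → ℝ)} (hP : IsProjD D S P) {A : Matrix m (Cell J K) ℝ}
    (hS : S ≤ LinearMap.ker A.mulVecLin) : A * P = 0 :=
  ext_of_mulVec_single fun i => by
    rw [← mulVec_mulVec, zero_mulVec]
    exact hS (hP (Pi.single i 1)).1

theorem covariance_invariant_under_sampling_scheme_general
    {J K L : ℕ}
    (μ : Cell J K → ℝ)
    (Z : Matrix (Cell J K) (Fin L) ℝ)
    (PH : Matrix (Cell J K) (Cell J K) ℝ)
    (N : Submodule ℝ (Cell J K → ℝ)) (hN : N ≤ margSpace J K)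
    (PN : Matrix (Cell J K) (Cell J K) ℝ)
    (hPN : IsProjD (Matrix.diagonal μ) N PN) :
    (Cmat J K)ᵀ * PN = 0 ∧
    ((Zred Z)ᵀ * Zred Z)⁻¹ * (Zred Z)ᵀ * (Cmat J K)ᵀ * (PH - PN) * (Matrix.diagonal μ)⁻¹ *
        Cmat J K * (((Zred Z)ᵀ * Zred Z)⁻¹ * (Zred Z)ᵀ)ᵀ =
      ((Zred Z)ᵀ * Zred Z)⁻¹ * (Zred Z)ᵀ * (Cmat J K)ᵀ * PH * (Matrix.diagonal μ)⁻¹ *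
        Cmat J K * (((Zred Z)ᵀ * Zred Z)⁻¹ * (Zred Z)ᵀ)ᵀ := by
  have hCPN : (Cmat J K)ᵀ * PN = 0 :=
    hPN.mul_eq_zero_of_le_ker (hN.trans margSpace_le_ker_Cmat_transpose)
  refine ⟨hCPN, ?_⟩
  rw [Matrix.mul_sub, Matrix.mul_assoc _ (Cmat J K)ᵀ PN, hCPN, Matrix.mul_zero, sub_zero]

/-- For every subspace `𝒩 ⊆ 𝒯`, `Cᵀ P^D_𝒩 = 0`, and consequently the
asymptotic covariance matrix `Σ_θ̂ = Z°⁻ Cᵀ P^D_ℋ D⁻¹ C Z°⁻ᵀ` is the same for every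
choice of `𝒩 ⊆ 𝒯` (in particular for `𝒩 = 𝒟, ℛ, 𝒞, {0}`, i.e. multinomial,
row-multinomial, column-multinomial and Poisson sampling). -/
theorem covariance_invariant_under_sampling_scheme
    {J K L : ℕ} (hJ : 1 ≤ J) (hK : 1 ≤ K) (hL : 1 ≤ L)
    (μ : Cell J K → ℝ) (hμ : ∀ i, 0 < μ i)
    (Z : Matrix (Cell J K) (Fin L) ℝ)
    (hZrow : ∀ j, Z (j, 0) = 0) (hZcol : ∀ k, Z (0, k) = 0)
    (hZrank : (Zred Z).rank = L)
    (PH : Matrix (Cell J K) (Cell J K) ℝ)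
    (hPH : IsProjD (Matrix.diagonal μ) (modelSpace Z) PH)
    (N : Submodule ℝ (Cell J K → ℝ)) (hN : N ≤ margSpace J K)
    (PN : Matrix (Cell J K) (Cell J K) ℝ)
    (hPN : IsProjD (Matrix.diagonal μ) N PN) :
    (Cmat J K)ᵀ * PN = 0 ∧
    ((Zred Z)ᵀ * Zred Z)⁻¹ * (Zred Z)ᵀ * (Cmat J K)ᵀ * (PH - PN) * (Matrix.diagonal μ)⁻¹ *
        Cmat J K * (((Zred Z)ᵀ * Zred Z)⁻¹ * (Zred Z)ᵀ)ᵀ =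
      ((Zred Z)ᵀ * Zred Z)⁻¹ * (Zred Z)ᵀ * (Cmat J K)ᵀ * PH * (Matrix.diagonal μ)⁻¹ *
        Cmat J K * (((Zred Z)ᵀ * Zred Z)⁻¹ * (Zred Z)ᵀ)ᵀ :=
  covariance_invariant_under_sampling_scheme_general μ Z PH N hN PN hPN
end

section
/- Set S = D(I_I − P^D_ℛ). Then the (K+L)×(K+L) block matrix 𝐉 = [[EᵀSE, EᵀSZ],[ZᵀSE, ZᵀSZ]] is invertible, and its inverse equals the block matrix Σ_λ̂ = [[Bᵀ P^D_ℋ D⁻¹ B, Bᵀ P^D_ℋ D⁻¹ C Z°⁻ᵀ],[Z°⁻ Cᵀ P^D_ℋ D⁻¹ B, Z°⁻ Cᵀ P^D_ℋ D⁻¹ C Z°⁻ᵀ]]; i.e. for sampling conditional on X the inverse of the covariance matrix of the score vector of the multivariate linear logistic regression model coincides with the asymptotic covariance matrix Σ_λ̂ of the compound parameter estimator λ̂ = (γ̂°, θ̂⃗) from fixed-cells contingency-table asymptotics. -/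
open Matrix BigOperators

/-!
With `X = [E Z]` and `A = [B, C Z°⁻ᵀ]`, the score covariance is `Xᵀ S X` and `Σ_λ̂` is
`Aᵀ P_ℋ D⁻¹ A`. The contrasts satisfy `Aᵀ X = 1` and `Aᵀ ℛ = 0`, and `ℋ = ℛ + col X`, so
`1 - X Aᵀ` maps `ℋ` into `ℛ`, which `S = D (1 - P_ℛ)` annihilates. Hence
`Xᵀ S X Aᵀ P_ℋ D⁻¹ A = Xᵀ D (1 - P_ℛ) P_ℋ D⁻¹ A`, and the `D`-self-adjointness of the two
projections together with `P_ℋ X = X`, `P_ℋ P_ℛ = P_ℛ` reduces this to `Xᵀ A - (Aᵀ P_ℛ X)ᵀ = 1`.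
-/

open Matrix

namespace Matrix

section Semiring

variable {R : Type*} [Semiring R] {n m p : Type*} [Fintype n]

theorem mul_eq_mul_of_col_mem {N N' : Matrix p n R} {M : Matrix n m R} {S : Submodule R (n → R)}
    (hN : ∀ x ∈ S, N *ᵥ x = N' *ᵥ x) (hM : ∀ j, M.col j ∈ S) : N * M = N' * M := by
  ext i j
  exact congrFun (hN _ (hM j)) i

theorem fromCols_transpose_mul_mul_fromCols {n₁ n₂ p₁ p₂ : Type*} [Fintype m]
    (A₁ : Matrix n n₁ R) (A₂ : Matrix n n₂ R) (M : Matrix n m R) (B₁ : Matrix m p₁ R)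
    (B₂ : Matrix m p₂ R) :
    (fromCols A₁ A₂)ᵀ * M * fromCols B₁ B₂ =
      fromBlocks (A₁ᵀ * M * B₁) (A₁ᵀ * M * B₂) (A₂ᵀ * M * B₁) (A₂ᵀ * M * B₂) := by
  rw [transpose_fromCols, fromRows_mul, fromRows_mul_fromCols]

end Semiring

theorem dotProduct_diagonal_mulVec_comm {R n : Type*} [CommSemiring R] [Fintype n]
    [DecidableEq n] (d x y : n → R) : x ⬝ᵥ diagonal d *ᵥ y = y ⬝ᵥ diagonal d *ᵥ x := by
  simp only [dotProduct, mulVec_diagonal]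
  exact Finset.sum_congr rfl fun i _ => by ring

section LinearOrderedField

variable {𝕜 : Type*} [Field 𝕜] [LinearOrder 𝕜] [IsStrictOrderedRing 𝕜] {n m : Type*}
  [Fintype n] [Fintype m] [DecidableEq n]

theorem isUnit_transpose_mul_self_of_rank_eq {M : Matrix m n 𝕜}
    (h : M.rank = Fintype.card n) : IsUnit (Mᵀ * M) := by
  have hrange : LinearMap.range (Mᵀ * M).mulVecLin = ⊤ := Submodule.eq_top_of_finrank_eq <| by
    rw [← rank, rank_transpose_mul_self, h, Module.finrank_fintype_fun_eq_card]
  rw [← mulVec_injective_iff_isUnit]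
  exact LinearMap.injective_iff_surjective.mpr (LinearMap.range_eq_top.mp hrange)

theorem inv_transpose_mul_self_mul_transpose_mul_self {M : Matrix m n 𝕜}
    (h : M.rank = Fintype.card n) : (Mᵀ * M)⁻¹ * Mᵀ * M = 1 := by
  rw [Matrix.mul_assoc, nonsing_inv_mul _ ((isUnit_iff_isUnit_det _).mp
    (isUnit_transpose_mul_self_of_rank_eq h))]

end LinearOrderedField

variable {R : Type*} [CommRing R] {n m : Type*} [Fintype n] [DecidableEq n] [Fintype m]
  [DecidableEq m]

theorem isUnit_and_inv_eq_of_mul_eq_one {A B : Matrix n n R} (h : A * B = 1) :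
    IsUnit A ∧ A⁻¹ = B :=
  ⟨(isUnit_iff_isUnit_det A).mpr (isUnit_det_of_right_inverse h), inv_eq_right_inv h⟩

theorem mul_eq_one_of_biorthogonal {D PH PR : Matrix n n R} {X A : Matrix n m R}
    (hD : IsUnit D.det) (hDPH : D * PH = PHᵀ * D) (hDPR : D * PR = PRᵀ * D)
    (hPHX : PH * X = X) (hPHPR : PH * PR = PR) (hAX : Aᵀ * X = 1) (hAPR : Aᵀ * PR = 0)
    (hXA : PR * ((1 - X * Aᵀ) * PH) = (1 - X * Aᵀ) * PH) :
    Xᵀ * (D * (1 - PR)) * X * (Aᵀ * (PH * D⁻¹) * A) = 1 := by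
  have hfix : (1 - PR) * (X * Aᵀ * PH) = (1 - PR) * PH := by
    have h : (1 - PR) * ((1 - X * Aᵀ) * PH) = 0 := by
      rw [Matrix.sub_mul 1, Matrix.one_mul, hXA, sub_self]
    rw [Matrix.sub_mul 1 (X * Aᵀ), Matrix.one_mul, Matrix.mul_sub, sub_eq_zero] at h
    exact h.symm
  have hXD : Xᵀ * D * PH = Xᵀ * D := by
    rw [Matrix.mul_assoc, hDPH, ← Matrix.mul_assoc, ← transpose_mul, hPHX]
  have hDPRPH : D * PR * PH = D * PR := by
    rw [hDPR, Matrix.mul_assoc, hDPH, ← Matrix.mul_assoc, ← transpose_mul, hPHPR]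
  have hXtA : Xᵀ * A = 1 := by
    rw [← transpose_transpose A, ← transpose_mul, hAX, transpose_one]
  have hXtPRtA : Xᵀ * PRᵀ * A = 0 := by
    rw [← transpose_transpose A, ← transpose_mul, ← transpose_mul, ← Matrix.mul_assoc, hAPR,
      Matrix.zero_mul, transpose_zero]
  calc Xᵀ * (D * (1 - PR)) * X * (Aᵀ * (PH * D⁻¹) * A)
      = Xᵀ * D * ((1 - PR) * (X * Aᵀ * PH)) * D⁻¹ * A := by simp only [Matrix.mul_assoc]
    _ = Xᵀ * D * PH * D⁻¹ * A - Xᵀ * (D * PR * PH) * D⁻¹ * A := by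
      rw [hfix]; simp only [Matrix.mul_sub, Matrix.sub_mul, Matrix.one_mul, Matrix.mul_assoc]
    _ = Xᵀ * A - Xᵀ * PRᵀ * A := by
      rw [hXD, hDPRPH, hDPR]; simp only [Matrix.mul_assoc, mul_nonsing_inv_cancel_left _ _ hD]
    _ = 1 := by rw [hXtA, hXtPRtA, sub_zero]

end Matrix

namespace IsProjD

variable {J K : ℕ} {μ : Cell J K → ℝ} {S : Submodule ℝ (Cell J K → ℝ)}
  {P : Matrix (Cell J K) (Cell J K) ℝ}

theorem col_mem (hP : IsProjD (diagonal μ) S P) (j : Cell J K) : P.col j ∈ S := by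
  simpa only [mulVec_single_one] using (hP (Pi.single j 1)).1

theorem mulVec_eq_self (hμ : ∀ i, 0 < μ i) (hP : IsProjD (diagonal μ) S P) {x : Cell J K → ℝ}
    (hx : x ∈ S) : P *ᵥ x = x := by
  have hres : x - P *ᵥ x ∈ S := S.sub_mem hx (hP x).1
  by_contra hne
  have hpos := (posDef_diagonal_iff.mpr hμ).dotProduct_mulVec_pos (sub_ne_zero.mpr (Ne.symm hne))
  rw [star_trivial, (hP x).2 _ hres] at hpos
  exact hpos.false

theorem mul_eq_self {n : Type*} {M : Matrix (Cell J K) n ℝ} (hμ : ∀ i, 0 < μ i)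
    (hP : IsProjD (diagonal μ) S P) (hM : ∀ j, M.col j ∈ S) : P * M = M := by
  simpa only [Matrix.one_mul] using mul_eq_mul_of_col_mem (N := P) (N' := 1)
    (fun x hx => by rw [one_mulVec]; exact hP.mulVec_eq_self hμ hx) hM

theorem diagonal_mul (hP : IsProjD (diagonal μ) S P) : diagonal μ * P = Pᵀ * diagonal μ := by
  have hform : ∀ x y, x ⬝ᵥ diagonal μ *ᵥ (P *ᵥ y) = (P *ᵥ x) ⬝ᵥ diagonal μ *ᵥ (P *ᵥ y) :=
    fun x y => by rw [← sub_eq_zero, ← sub_dotProduct, (hP x).2 _ (hP y).1]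
  refine (toLinearMap₂' ℝ (S₁ := ℝ) (S₂ := ℝ)).injective (LinearMap.ext₂ fun x y => ?_)
  rw [toLinearMap₂'_apply', toLinearMap₂'_apply', ← mulVec_mulVec, ← mulVec_mulVec,
    mulVec_transpose]
  calc x ⬝ᵥ diagonal μ *ᵥ (P *ᵥ y) = (P *ᵥ x) ⬝ᵥ diagonal μ *ᵥ (P *ᵥ y) := hform x y
    _ = (P *ᵥ y) ⬝ᵥ diagonal μ *ᵥ (P *ᵥ x) := dotProduct_diagonal_mulVec_comm _ _ _
    _ = y ⬝ᵥ diagonal μ *ᵥ (P *ᵥ x) := (hform y x).symm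
    _ = (P *ᵥ x) ⬝ᵥ diagonal μ *ᵥ y := dotProduct_diagonal_mulVec_comm _ _ _
    _ = x ⬝ᵥ (diagonal μ *ᵥ y) ᵥ* P := by
      rw [dotProduct_comm x, ← dotProduct_mulVec, dotProduct_comm]

end IsProjD

variable {J K L : ℕ}

theorem eRow_apply (j : Fin (J + 1)) (i : Cell J K) : eRow j i = if i.1 = j then 1 else 0 := by
  by_cases h : i.1 = j <;> simp [eRow, eV, Finset.sum_apply, Pi.single_apply, Prod.ext_iff, h]

theorem eCol_apply (k : Fin (K + 1)) (i : Cell J K) : eCol k i = if i.2 = k then 1 else 0 := by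
  by_cases h : i.2 = k <;> simp [eCol, eV, Finset.sum_apply, Pi.single_apply, Prod.ext_iff, h]

theorem Bmat_transpose_mulVec (v : Cell J K → ℝ) :
    (Bmat J K)ᵀ *ᵥ v = fun k => v (0, k.succ) - v (0, 0) := by
  ext k
  simp [mulVec, dotProduct, Bmat, bVec, eV, sub_mul, Finset.sum_sub_distrib, Pi.single_apply]

theorem Cmat_transpose_mulVec (v : Cell J K → ℝ) :
    (Cmat J K)ᵀ *ᵥ v =
      fun p => v (p.1.succ, p.2.succ) + v (0, 0) - v (p.1.succ, 0) - v (0, p.2.succ) := by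
  ext p
  simp [mulVec, dotProduct, Cmat, cVec, eV, add_mul, sub_mul, Finset.sum_add_distrib,
    Finset.sum_sub_distrib, Pi.single_apply]


theorem Bmat_transpose_mul {n : Type*} (M : Matrix (Cell J K) n ℝ) :
    (Bmat J K)ᵀ * M = of fun k l => M (0, k.succ) l - M (0, 0) l := by
  ext k l
  exact congrFun (Bmat_transpose_mulVec (M.col l)) k

theorem Cmat_transpose_mul {n : Type*} (M : Matrix (Cell J K) n ℝ) :
    (Cmat J K)ᵀ * M = of fun p l =>
      M (p.1.succ, p.2.succ) l + M (0, 0) l - M (p.1.succ, 0) l - M (0, p.2.succ) l := by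
  ext p l
  exact congrFun (Cmat_transpose_mulVec (M.col l)) p

theorem Bmat_transpose_mul_Emat : (Bmat J K)ᵀ * Emat J K = 1 := by
  ext k l
  simp [Bmat_transpose_mul, Emat, eCol_apply, one_apply, (Fin.succ_ne_zero _).symm]

theorem Cmat_transpose_mul_Emat : (Cmat J K)ᵀ * Emat J K = 0 := by
  ext p l
  simp [Cmat_transpose_mul, Emat, eCol_apply, (Fin.succ_ne_zero _).symm]

theorem Bmat_transpose_mul_eq_zero {Z : Matrix (Cell J K) (Fin L) ℝ}
    (hZcol : ∀ k, Z (0, k) = 0) : (Bmat J K)ᵀ * Z = 0 := by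
  ext k l
  simp [Bmat_transpose_mul, hZcol]

theorem Cmat_transpose_mul_eq_Zred {Z : Matrix (Cell J K) (Fin L) ℝ}
    (hZrow : ∀ j, Z (j, 0) = 0) (hZcol : ∀ k, Z (0, k) = 0) : (Cmat J K)ᵀ * Z = Zred Z := by
  ext p l
  simp [Cmat_transpose_mul, Zred, hZrow, hZcol]

theorem Bmat_transpose_mulVec_eRow (j : Fin (J + 1)) : (Bmat J K)ᵀ *ᵥ eRow j = 0 := by
  ext k
  simp [Bmat_transpose_mulVec, eRow_apply]

theorem Cmat_transpose_mulVec_eRow (j : Fin (J + 1)) : (Cmat J K)ᵀ *ᵥ eRow j = 0 := by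
  ext p
  simp [Cmat_transpose_mulVec, eRow_apply]

def Xmat (Z : Matrix (Cell J K) (Fin L) ℝ) : Matrix (Cell J K) (Fin K ⊕ Fin L) ℝ :=
  fromCols (Emat J K) Z

/-- `Aᵀ` reads the compound parameter `λ = (γ°, θ)` off a linear predictor `X λ` plus row
effects, hence `Aᵀ X = 1` and `Aᵀ ℛ = 0`. -/
noncomputable def Amat (Z : Matrix (Cell J K) (Fin L) ℝ) : Matrix (Cell J K) (Fin K ⊕ Fin L) ℝ :=
  fromCols (Bmat J K) (Cmat J K * (((Zred Z)ᵀ * Zred Z)⁻¹ * (Zred Z)ᵀ)ᵀ)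

theorem Amat_transpose_mul_Xmat {Z : Matrix (Cell J K) (Fin L) ℝ} (hZrow : ∀ j, Z (j, 0) = 0)
    (hZcol : ∀ k, Z (0, k) = 0) (hZrank : (Zred Z).rank = L) : (Amat Z)ᵀ * Xmat Z = 1 := by
  rw [Amat, Xmat, transpose_fromCols, fromRows_mul_fromCols, transpose_mul, transpose_transpose,
    Bmat_transpose_mul_Emat, Bmat_transpose_mul_eq_zero hZcol, Matrix.mul_assoc _ _ (Emat J K),
    Cmat_transpose_mul_Emat, Matrix.mul_zero, Matrix.mul_assoc _ _ Z,
    Cmat_transpose_mul_eq_Zred hZrow hZcol,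
    inv_transpose_mul_self_mul_transpose_mul_self (hZrank.trans (Fintype.card_fin L).symm),
    fromBlocks_one]

theorem Amat_transpose_mulVec_eq_zero_of_mem_rowSpace (Z : Matrix (Cell J K) (Fin L) ℝ)
    {r : Cell J K → ℝ} (hr : r ∈ rowSpace J K) : (Amat Z)ᵀ *ᵥ r = 0 := by
  refine (Submodule.span_le (p := LinearMap.ker (Amat Z)ᵀ.mulVecLin)).mpr ?_ hr
  rintro _ ⟨j, rfl⟩
  rw [SetLike.mem_coe, LinearMap.mem_ker, mulVecLin_apply, Amat, transpose_fromCols,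
    fromRows_mulVec, transpose_mul, transpose_transpose, ← mulVec_mulVec,
    Bmat_transpose_mulVec_eRow, Cmat_transpose_mulVec_eRow, mulVec_zero]
  ext (_ | _) <;> rfl

theorem rowSpace_le_modelSpace (Z : Matrix (Cell J K) (Fin L) ℝ) : rowSpace J K ≤ modelSpace Z :=
  le_sup_left.trans le_sup_left

theorem Xmat_col_mem_modelSpace (Z : Matrix (Cell J K) (Fin L) ℝ) (t : Fin K ⊕ Fin L) :
    (Xmat Z).col t ∈ modelSpace Z := by
  rcases t with k | l
  · exact Submodule.mem_sup_left (Submodule.mem_sup_right (Submodule.subset_span ⟨k.succ, rfl⟩))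
  · exact Submodule.mem_sup_right (Submodule.subset_span ⟨l, rfl⟩)

theorem eCol_zero_add_sum_eCol_succ :
    eCol 0 + ∑ k : Fin K, eCol k.succ = ∑ j : Fin (J + 1), eRow (K := K) j := by
  rw [← Fin.sum_univ_succ (f := eCol)]
  simp only [eCol, eRow]
  exact Finset.sum_comm

theorem modelSpace_le_rowSpace_sup_colSpan_Xmat (Z : Matrix (Cell J K) (Fin L) ℝ) :
    modelSpace Z ≤ rowSpace J K ⊔ colSpan (Xmat Z) := by
  have hX : ∀ t, (Xmat Z).col t ∈ rowSpace J K ⊔ colSpan (Xmat Z) := fun t =>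
    Submodule.mem_sup_right (Submodule.subset_span ⟨t, rfl⟩)
  refine sup_le (sup_le le_sup_left ?_) ?_
  · refine Submodule.span_le.mpr ?_
    rintro _ ⟨k, rfl⟩
    induction k using Fin.cases with
    | zero =>
      rw [← add_sub_cancel_right (eCol 0) (∑ k : Fin K, eCol k.succ), eCol_zero_add_sum_eCol_succ]
      exact Submodule.sub_mem _
        (Submodule.mem_sup_left (Submodule.sum_mem _ fun j _ => Submodule.subset_span ⟨j, rfl⟩))
        (Submodule.sum_mem _ fun k _ => hX (.inl k))
    | succ k => exact hX (.inl k)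
  · exact Submodule.span_le.mpr fun _ ⟨l, hl⟩ => hl ▸ hX (.inr l)

theorem sub_Xmat_mulVec_mem_rowSpace {Z : Matrix (Cell J K) (Fin L) ℝ}
    (hZrow : ∀ j, Z (j, 0) = 0) (hZcol : ∀ k, Z (0, k) = 0) (hZrank : (Zred Z).rank = L)
    {h : Cell J K → ℝ} (hh : h ∈ modelSpace Z) :
    h - Xmat Z *ᵥ ((Amat Z)ᵀ *ᵥ h) ∈ rowSpace J K := by
  obtain ⟨r, hr, y, hy, rfl⟩ := Submodule.mem_sup.mp (modelSpace_le_rowSpace_sup_colSpan_Xmat Z hh)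
  obtain ⟨c, rfl⟩ : y ∈ LinearMap.range (Xmat Z).mulVecLin := by rwa [range_mulVecLin]
  rwa [mulVecLin_apply, mulVec_add, Amat_transpose_mulVec_eq_zero_of_mem_rowSpace Z hr,
    mulVec_mulVec, Amat_transpose_mul_Xmat hZrow hZcol hZrank, one_mulVec, zero_add,
    add_sub_cancel_right]

theorem score_covariance_inverse_eq_lambda_covariance_general
    {J K L : ℕ}
    (μ : Cell J K → ℝ) (hμ : ∀ i, 0 < μ i)
    (Z : Matrix (Cell J K) (Fin L) ℝ)
    (hZrow : ∀ j, Z (j, 0) = 0) (hZcol : ∀ k, Z (0, k) = 0)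
    (hZrank : (Zred Z).rank = L)
    (PH : Matrix (Cell J K) (Cell J K) ℝ)
    (hPH : IsProjD (Matrix.diagonal μ) (modelSpace Z) PH)
    (PR : Matrix (Cell J K) (Cell J K) ℝ)
    (hPR : IsProjD (Matrix.diagonal μ) (rowSpace J K) PR)
    (S : Matrix (Cell J K) (Cell J K) ℝ)
    (hS : S = Matrix.diagonal μ * (1 - PR)) :
    IsUnit (Matrix.fromBlocks
        ((Emat J K)ᵀ * S * Emat J K) ((Emat J K)ᵀ * S * Z)
        (Zᵀ * S * Emat J K) (Zᵀ * S * Z)) ∧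
    (Matrix.fromBlocks
        ((Emat J K)ᵀ * S * Emat J K) ((Emat J K)ᵀ * S * Z)
        (Zᵀ * S * Emat J K) (Zᵀ * S * Z))⁻¹ =
      Matrix.fromBlocks
        ((Bmat J K)ᵀ * PH * (Matrix.diagonal μ)⁻¹ * Bmat J K)
        ((Bmat J K)ᵀ * PH * (Matrix.diagonal μ)⁻¹ * Cmat J K *
          (((Zred Z)ᵀ * Zred Z)⁻¹ * (Zred Z)ᵀ)ᵀ)
        (((Zred Z)ᵀ * Zred Z)⁻¹ * (Zred Z)ᵀ * (Cmat J K)ᵀ * PH * (Matrix.diagonal μ)⁻¹ *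
          Bmat J K)
        (((Zred Z)ᵀ * Zred Z)⁻¹ * (Zred Z)ᵀ * (Cmat J K)ᵀ * PH * (Matrix.diagonal μ)⁻¹ *
          Cmat J K * (((Zred Z)ᵀ * Zred Z)⁻¹ * (Zred Z)ᵀ)ᵀ) := by
  have hD : IsUnit (diagonal μ).det := by
    rw [det_diagonal]
    exact (Finset.prod_pos fun i _ => hμ i).ne'.isUnit
  have hPHX : PH * Xmat Z = Xmat Z := hPH.mul_eq_self hμ (Xmat_col_mem_modelSpace Z)
  have hPHPR : PH * PR = PR :=
    hPH.mul_eq_self hμ fun j => rowSpace_le_modelSpace Z (hPR.col_mem j)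
  have hAPR : (Amat Z)ᵀ * PR = 0 := by
    simpa only [Matrix.zero_mul] using mul_eq_mul_of_col_mem (N' := 0) (fun x hx => by
      rw [zero_mulVec, Amat_transpose_mulVec_eq_zero_of_mem_rowSpace Z hx]) hPR.col_mem
  have hXA : PR * ((1 - Xmat Z * (Amat Z)ᵀ) * PH) = (1 - Xmat Z * (Amat Z)ᵀ) * PH :=
    hPR.mul_eq_self hμ fun j => by
      change (1 - Xmat Z * (Amat Z)ᵀ) *ᵥ PH.col j ∈ rowSpace J K
      rw [sub_mulVec, one_mulVec, ← mulVec_mulVec]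
      exact sub_Xmat_mulVec_mem_rowSpace hZrow hZcol hZrank (hPH.col_mem j)
  have hmul := mul_eq_one_of_biorthogonal hD hPH.diagonal_mul hPR.diagonal_mul hPHX hPHPR
    (Amat_transpose_mul_Xmat hZrow hZcol hZrank) hAPR hXA
  rw [Xmat, Amat, fromCols_transpose_mul_mul_fromCols, fromCols_transpose_mul_mul_fromCols,
    ← hS] at hmul
  refine isUnit_and_inv_eq_of_mul_eq_one ?_
  simpa only [Matrix.mul_assoc, transpose_mul, transpose_transpose] using hmul

/-- for sampling conditional on `X`, the covariance matrix
`𝐉 = [[EᵀSE, EᵀSZ],[ZᵀSE, ZᵀSZ]]` of the score vector (with `S = D(I − P^D_ℛ)`) is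
invertible and its inverse is the block matrix `Σ_λ̂` from fixed-cells
contingency-table asymptotics. -/
theorem score_covariance_inverse_eq_lambda_covariance
    {J K L : ℕ} (hJ : 1 ≤ J) (hK : 1 ≤ K) (hL : 1 ≤ L)
    (μ : Cell J K → ℝ) (hμ : ∀ i, 0 < μ i)
    (Z : Matrix (Cell J K) (Fin L) ℝ)
    (hZrow : ∀ j, Z (j, 0) = 0) (hZcol : ∀ k, Z (0, k) = 0)
    (hZrank : (Zred Z).rank = L)
    (PH : Matrix (Cell J K) (Cell J K) ℝ)
    (hPH : IsProjD (Matrix.diagonal μ) (modelSpace Z) PH)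
    (PR : Matrix (Cell J K) (Cell J K) ℝ)
    (hPR : IsProjD (Matrix.diagonal μ) (rowSpace J K) PR)
    (S : Matrix (Cell J K) (Cell J K) ℝ)
    (hS : S = Matrix.diagonal μ * (1 - PR)) :
    IsUnit (Matrix.fromBlocks
        ((Emat J K)ᵀ * S * Emat J K) ((Emat J K)ᵀ * S * Z)
        (Zᵀ * S * Emat J K) (Zᵀ * S * Z)) ∧
    (Matrix.fromBlocks
        ((Emat J K)ᵀ * S * Emat J K) ((Emat J K)ᵀ * S * Z)
        (Zᵀ * S * Emat J K) (Zᵀ * S * Z))⁻¹ =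
      Matrix.fromBlocks
        ((Bmat J K)ᵀ * PH * (Matrix.diagonal μ)⁻¹ * Bmat J K)
        ((Bmat J K)ᵀ * PH * (Matrix.diagonal μ)⁻¹ * Cmat J K *
          (((Zred Z)ᵀ * Zred Z)⁻¹ * (Zred Z)ᵀ)ᵀ)
        (((Zred Z)ᵀ * Zred Z)⁻¹ * (Zred Z)ᵀ * (Cmat J K)ᵀ * PH * (Matrix.diagonal μ)⁻¹ *
          Bmat J K)
        (((Zred Z)ᵀ * Zred Z)⁻¹ * (Zred Z)ᵀ * (Cmat J K)ᵀ * PH * (Matrix.diagonal μ)⁻¹ *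
          Cmat J K * (((Zred Z)ᵀ * Zred Z)⁻¹ * (Zred Z)ᵀ)ᵀ) :=
  score_covariance_inverse_eq_lambda_covariance_general μ hμ Z hZrow hZcol hZrank PH hPH PR hPR S hS
end

section
/- If the entries of μ sum to n > 0 (i.e. μ_{++} = n), then D − n⁻¹ μμᵀ = D(I_I − P^D_𝒟); i.e. the covariance matrix of a multinomially distributed contingency table with expectation vector μ equals D times the D-orthogonal projection onto the D-orthogonal complement of the diagonal space. -/
/-! The `D`-orthogonal projection onto `span {e_{++}}` sends `x` to `(μᵀx / n) e_{++}`, since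
`e_{++}ᵀ D e_{++} = μ_{++} = n`; hence `P^D_𝒟 = n⁻¹ e_{++} μᵀ` and `D P^D_𝒟 = n⁻¹ μμᵀ`. -/

open Matrix BigOperators

theorem eq_smul_one_of_mem_span_one_of_dotProduct_eq {ι 𝕜 : Type*} [Fintype ι] [Field 𝕜]
    {μ x v : ι → 𝕜} (hv : v ∈ 𝕜 ∙ (1 : ι → 𝕜)) (horth : (x - v) ⬝ᵥ μ = 0)
    (hμ : ∑ i, μ i ≠ 0) : v = (x ⬝ᵥ μ / ∑ i, μ i) • 1 := by
  obtain ⟨c, rfl⟩ := Submodule.mem_span_singleton.mp hv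
  rw [sub_dotProduct, smul_dotProduct, one_dotProduct, smul_eq_mul, sub_eq_zero] at horth
  rw [horth, mul_div_cancel_right₀ c hμ]

theorem diagonal_mulVec_one {ι α : Type*} [Fintype ι] [DecidableEq ι] [NonAssocSemiring α]
    (v : ι → α) :
    diagonal v *ᵥ 1 = v :=
  funext fun i => by rw [mulVec_diagonal, Pi.one_apply, mul_one]

theorem eAll_eq_one (J K : ℕ) : eAll J K = 1 := by
  rw [eAll, ← Fintype.sum_prod_type']
  exact Finset.univ_sum_single 1

theorem IsProjD.eq_smul_vecMulVec_of_diagSpace {J K : ℕ} {μ : Cell J K → ℝ}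
    {P : Matrix (Cell J K) (Cell J K) ℝ} {n : ℝ} (hn : n ≠ 0) (hsum : ∑ i, μ i = n)
    (hP : IsProjD (diagonal μ) (diagSpace J K) P) :
    P = n⁻¹ • vecMulVec 1 μ := by
  refine ext_iff_mulVec.mpr fun x => ?_
  obtain ⟨hmem, horth⟩ := hP x
  rw [diagSpace, eAll_eq_one] at hmem horth
  have horth_one : (x - P *ᵥ x) ⬝ᵥ μ = 0 := by
    have := horth 1 (Submodule.mem_span_singleton_self 1)
    rwa [diagonal_mulVec_one] at this
  rw [eq_smul_one_of_mem_span_one_of_dotProduct_eq hmem horth_one (hsum ▸ hn), hsum,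
    smul_mulVec, vecMulVec_mulVec, op_smul_eq_smul, smul_smul, dotProduct_comm, div_eq_inv_mul]

theorem multinomial_covariance_as_projection_general
    {J K : ℕ}
    (μ : Cell J K → ℝ)
    (n : ℝ) (hn : 0 < n) (hsum : ∑ i, μ i = n)
    (PD : Matrix (Cell J K) (Cell J K) ℝ)
    (hPD : IsProjD (Matrix.diagonal μ) (diagSpace J K) PD) :
    Matrix.diagonal μ - n⁻¹ • Matrix.vecMulVec μ μ = Matrix.diagonal μ * (1 - PD) := by
  rw [hPD.eq_smul_vecMulVec_of_diagSpace hn.ne' hsum, mul_sub, mul_one, Matrix.mul_smul,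
    mul_vecMulVec, diagonal_mulVec_one]

/-- if `μ_{++} = n > 0` then `D − n⁻¹ μμᵀ = D(I − P^D_𝒟)`, i.e. the
multinomial covariance matrix equals `D` times the `D`-orthogonal projection onto the
`D`-orthogonal complement of the diagonal space. -/
theorem multinomial_covariance_as_projection
    {J K : ℕ} (hJ : 1 ≤ J) (hK : 1 ≤ K)
    (μ : Cell J K → ℝ) (hμ : ∀ i, 0 < μ i)
    (n : ℝ) (hn : 0 < n) (hsum : ∑ i, μ i = n)
    (PD : Matrix (Cell J K) (Cell J K) ℝ)
    (hPD : IsProjD (Matrix.diagonal μ) (diagSpace J K) PD) :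
    Matrix.diagonal μ - n⁻¹ • Matrix.vecMulVec μ μ = Matrix.diagonal μ * (1 - PD) :=
  multinomial_covariance_as_projection_general μ n hn hsum PD hPD
end
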